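/- arXiv:2402.02307 — 4 statements merged into one kernel-verified Lean document; each statement's English description precedes it below -/
import Mathlib

section
/- Let L, N be positive integers with N ≥ 2 and let S ∈ ℂ^{L×N} be a matrix with nonzero columns s_1, …, s_N. Let Ŝ ∈ ℂ^{L²×N} be the column-wise Khatri–Rao product of the entrywise conjugate of S with S, i.e., the i-th column of Ŝ is conj(s_i) ⊗ s_i. Then the coherence of Ŝ equals the square of the coherence of S: μ(Ŝ) = μ(S)². -/
open ComplexConjugate

noncomputable section

/-- Complex inner product `⟨x, y⟩ = Σ_k conj(x_k) y_k`. -/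
def cinner {L : ℕ} (x y : Fin L → ℂ) : ℂ := ∑ k, conj (x k) * y k

/-- Euclidean norm. -/
def cnorm {L : ℕ} (x : Fin L → ℂ) : ℝ := Real.sqrt (∑ k, ‖x k‖ ^ 2)

/-- Coherence of a matrix given by its columns. -/
def coherence {L : ℕ} {ι : Type} (s : ι → Fin L → ℂ) : ℝ :=
  sSup {r : ℝ | ∃ k l : ι, k ≠ l ∧
    r = ‖cinner (s k) (s l)‖ / (cnorm (s k) * cnorm (s l))}

/-- Kronecker product of vectors, `(a ⊗ b)_{iL + j} = a_i b_j`. -/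
def kron {L : ℕ} (a b : Fin L → ℂ) : Fin (L * L) → ℂ := fun k =>
  a ⟨k.val / L, Nat.div_lt_of_lt_mul k.isLt⟩ *
  b ⟨k.val % L, Nat.mod_lt _ (by
      rcases Nat.eq_zero_or_pos L with h | h
      · exact absurd k.isLt (by simp [h])
      · exact h)⟩

/-!
Both the inner product and the norm are multiplicative under `⊗`, and conjugating both vectors
conjugates their inner product without changing norms. Hence the normalized inner product of the
columns `conj(s_k) ⊗ s_k` and `conj(s_l) ⊗ s_l` is the square of that of `s_k` and `s_l`, and
squaring, being monotone and continuous on `[0, ∞)`, commutes with the supremum over `k ≠ l`.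
-/

def coherenceRatio {L : ℕ} (x y : Fin L → ℂ) : ℝ := ‖cinner x y‖ / (cnorm x * cnorm y)

lemma coherenceRatio_nonneg {L : ℕ} (x y : Fin L → ℂ) : 0 ≤ coherenceRatio x y :=
  div_nonneg (norm_nonneg _) (mul_nonneg (Real.sqrt_nonneg _) (Real.sqrt_nonneg _))

lemma kron_finProdFinEquiv {L : ℕ} (a b : Fin L → ℂ) (i j : Fin L) :
    kron a b (finProdFinEquiv (i, j)) = a i * b j := by
  change a (finProdFinEquiv.symm (finProdFinEquiv (i, j))).1 *
    b (finProdFinEquiv.symm (finProdFinEquiv (i, j))).2 = _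
  rw [Equiv.symm_apply_apply]

lemma cinner_kron {L : ℕ} (a b c d : Fin L → ℂ) :
    cinner (kron a b) (kron c d) = cinner a c * cinner b d := by
  rw [cinner, cinner, cinner, Finset.sum_mul_sum, ← finProdFinEquiv.sum_comp,
    Fintype.sum_prod_type]
  simp only [kron_finProdFinEquiv, map_mul]
  exact Finset.sum_congr rfl fun i _ => Finset.sum_congr rfl fun j _ => by ring

lemma cnorm_kron {L : ℕ} (a b : Fin L → ℂ) : cnorm (kron a b) = cnorm a * cnorm b := by
  rw [cnorm, cnorm, cnorm, ← Real.sqrt_mul (by positivity), Finset.sum_mul_sum,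
    ← finProdFinEquiv.sum_comp, Fintype.sum_prod_type]
  simp only [kron_finProdFinEquiv, norm_mul, mul_pow]

lemma cinner_conj {L : ℕ} (a b : Fin L → ℂ) :
    cinner (fun k => conj (a k)) (fun k => conj (b k)) = conj (cinner a b) := by
  simp [cinner, map_sum, mul_comm]

lemma cnorm_conj {L : ℕ} (a : Fin L → ℂ) : cnorm (fun k => conj (a k)) = cnorm a := by
  simp [cnorm]

lemma coherenceRatio_kron_conj_self {L : ℕ} (a b : Fin L → ℂ) :
    coherenceRatio (kron (fun k => conj (a k)) a) (kron (fun k => conj (b k)) b) =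
      coherenceRatio a b ^ 2 := by
  rw [coherenceRatio, coherenceRatio, cinner_kron, cinner_conj, cnorm_kron, cnorm_kron,
    cnorm_conj, cnorm_conj, norm_mul, Complex.norm_conj]
  ring

lemma Real.sSup_image_sq {A : Set ℝ} (hA : ∀ a ∈ A, 0 ≤ a) (hbdd : BddAbove A) :
    sSup ((· ^ 2) '' A) = sSup A ^ 2 := by
  rcases A.eq_empty_or_nonempty with rfl | hne
  · simp
  · exact (MonotoneOn.map_csSup_of_continuousWithinAt (continuous_pow 2).continuousWithinAt
      (fun a ha _ _ hab => pow_le_pow_left₀ (hA a ha) hab 2) hne hbdd).symm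

lemma coherence_eq_sq_of_coherenceRatio_eq_sq {L M : ℕ} {ι : Type} [Finite ι]
    (s : ι → Fin L → ℂ) (t : ι → Fin M → ℂ)
    (h : ∀ k l, coherenceRatio (t k) (t l) = coherenceRatio (s k) (s l) ^ 2) :
    coherence t = coherence s ^ 2 := by
  change sSup {r : ℝ | ∃ k l : ι, k ≠ l ∧ r = coherenceRatio (t k) (t l)} =
    sSup {r : ℝ | ∃ k l : ι, k ≠ l ∧ r = coherenceRatio (s k) (s l)} ^ 2
  set A := {r : ℝ | ∃ k l : ι, k ≠ l ∧ r = coherenceRatio (s k) (s l)}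
  have hset :
      {r : ℝ | ∃ k l : ι, k ≠ l ∧ r = coherenceRatio (t k) (t l)} = (· ^ 2) '' A := by
    ext r
    constructor
    · rintro ⟨k, l, hkl, rfl⟩
      exact ⟨_, ⟨k, l, hkl, rfl⟩, (h k l).symm⟩
    · rintro ⟨_, ⟨k, l, hkl, rfl⟩, rfl⟩
      exact ⟨k, l, hkl, (h k l).symm⟩
  have hbdd : BddAbove A :=
    ((Set.finite_range fun p : ι × ι => coherenceRatio (s p.1) (s p.2)).subset
      (by rintro _ ⟨k, l, -, rfl⟩; exact ⟨(k, l), rfl⟩)).bddAbove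
  have hnonneg : ∀ r ∈ A, 0 ≤ r := by
    rintro _ ⟨k, l, -, rfl⟩
    exact coherenceRatio_nonneg _ _
  rw [hset, Real.sSup_image_sq hnonneg hbdd]

theorem coherence_khatriRao_eq_sq_general (L N : ℕ)
    (s : Fin N → Fin L → ℂ) :
    coherence (fun i => kron (fun k => conj (s i k)) (s i)) = (coherence s) ^ 2 :=
  coherence_eq_sq_of_coherenceRatio_eq_sq s _ fun k l =>
    coherenceRatio_kron_conj_self (s k) (s l)

/-- the coherence of the column-wise Khatri–Rao product `Ŝ` (whose `i`-th
column is `conj(s_i) ⊗ s_i`) equals the square of the coherence of `S`. -/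
theorem coherence_khatriRao_eq_sq (L N : ℕ) (hL : 0 < L) (hN : 2 ≤ N)
    (s : Fin N → Fin L → ℂ) (hs : ∀ i, s i ≠ 0) :
    coherence (fun i => kron (fun k => conj (s i k)) (s i)) = (coherence s) ^ 2 :=
  coherence_khatriRao_eq_sq_general L N s

end
end

section
/- Let L be an odd prime. For λ ∈ {0, …, L−1} and c ∈ {0, …, L−1} define φ_{λ,c} ∈ ℂ^L by φ_{λ,c}(k) = (1/√L) · e^{2πi(λ k² − c k)/L} for k ∈ {0, …, L−1}. Then each φ_{λ,c} has unit ℓ²-norm, and for all pairs (λ,c) ≠ (λ',c'), |⟨φ_{λ,c}, φ_{λ',c'}⟩| ≤ 1/√L. Consequently, the coherence of the L × L² matrix with columns φ_{λ,c} is at most 1/√L. -/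
open ComplexConjugate

noncomputable section

/-!
Up to the factor `1 / L`, the inner product of two distinct chirps is a quadratic exponential sum
`S = ∑ x, ψ (a x² + b x)` over `ZMod L`, with `(a, b) ≠ 0` and `ψ` the standard additive
character. For `a = 0` it is a complete linear character sum, hence `0`. For `a ≠ 0`, Weyl
differencing gives `|S|² = ∑ d, ψ (a d² + b d) ∑ y, ψ (2 a d y)`, and since `2 a` is invertible
only `d = 0` survives, so `|S| = √L`.
-/

open Finset

namespace AddChar

section CommRing

variable {R : Type*} [CommRing R] [Fintype R] [DecidableEq R] {ψ : AddChar R ℂ}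

lemma sum_quadratic_mul_conj (hψ : ψ.IsPrimitive) (a b : R) :
    (∑ x, ψ (a * x ^ 2 + b * x)) * conj (∑ x, ψ (a * x ^ 2 + b * x)) =
      Fintype.card R * ∑ d with 2 * a * d = 0, ψ (a * d ^ 2 + b * d) := by
  set q : R → R := fun x => a * x ^ 2 + b * x
  calc (∑ x, ψ (q x)) * conj (∑ y, ψ (q y))
      = ∑ y, ∑ x, ψ (q x - q y) := by
        simp only [map_sum, sum_mul_sum, sub_eq_add_neg, map_add_eq_mul, map_neg_eq_conj]
        exact sum_comm
    _ = ∑ y, ∑ d, ψ (q (y + d) - q y) :=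
        sum_congr rfl fun y _ => (Equiv.sum_comp (Equiv.addLeft y) _).symm
    _ = ∑ d, ψ (q d) * ∑ y, ψ (y * (2 * a * d)) := by
        rw [sum_comm]
        refine sum_congr rfl fun d _ => ?_
        rw [mul_sum]
        refine sum_congr rfl fun y _ => ?_
        rw [← map_add_eq_mul]
        congr 1
        ring
    _ = Fintype.card R * ∑ d with 2 * a * d = 0, ψ (q d) := by
        rw [mul_sum, sum_filter]
        refine sum_congr rfl fun d _ => ?_
        rw [sum_mulShift _ hψ]
        split_ifs <;> simp [mul_comm]

end CommRing

section Field

variable {F : Type*} [Field F] [Fintype F] [DecidableEq F] {ψ : AddChar F ℂ}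

lemma norm_sum_quadratic (hψ : ψ.IsPrimitive) (h2 : (2 : F) ≠ 0) {a : F} (ha : a ≠ 0) (b : F) :
    ‖∑ x, ψ (a * x ^ 2 + b * x)‖ = √(Fintype.card F) := by
  have hzero : ({d | 2 * a * d = 0} : Finset F) = {0} := by
    ext d
    simp [h2, ha]
  have hsq := sum_quadratic_mul_conj hψ a b
  rw [hzero, sum_singleton, Complex.mul_conj', zero_pow two_ne_zero, mul_zero, mul_zero,
    add_zero, map_zero_eq_one, mul_one] at hsq
  rw [← Real.sqrt_sq (norm_nonneg _)]
  exact congrArg _ (mod_cast hsq)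

lemma norm_sum_quadratic_le (hψ : ψ.IsPrimitive) (h2 : (2 : F) ≠ 0) {a b : F}
    (hab : a ≠ 0 ∨ b ≠ 0) : ‖∑ x, ψ (a * x ^ 2 + b * x)‖ ≤ √(Fintype.card F) := by
  rcases eq_or_ne a 0 with rfl | ha
  · have hb : b ≠ 0 := hab.resolve_left (not_not.2 rfl)
    simp only [zero_mul, zero_add, mul_comm b, sum_mulShift _ hψ, if_neg hb, Nat.cast_zero,
      norm_zero]
    positivity
  · exact (norm_sum_quadratic hψ h2 ha b).le

end Field

end AddChar

lemma ZMod.bijective_natCast_finVal (L : ℕ) [NeZero L] :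
    Function.Bijective fun k : Fin L => (k.val : ZMod L) := by
  refine ⟨fun i j h => Fin.ext ?_, fun x => ⟨⟨x.val, x.val_lt⟩, natCast_zmod_val x⟩⟩
  simpa [val_cast_of_lt i.isLt, val_cast_of_lt j.isLt] using congrArg val h

lemma coherence_le {L : ℕ} {ι : Type} {s : ι → Fin L → ℂ} {C : ℝ} (hC : 0 ≤ C)
    (hnorm : ∀ i, cnorm (s i) = 1) (hinner : ∀ i j, i ≠ j → ‖cinner (s i) (s j)‖ ≤ C) :
    coherence s ≤ C := by
  refine Real.sSup_le ?_ hC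
  rintro r ⟨i, j, hij, rfl⟩
  rw [hnorm i, hnorm j, mul_one, div_one]
  exact hinner i j hij

def chirp (L : ℕ) [NeZero L] (lc : Fin L × Fin L) (k : Fin L) : ℂ :=
  ((√L : ℝ) : ℂ)⁻¹ * ZMod.stdAddChar
    ((lc.1.val : ZMod L) * (k.val : ZMod L) ^ 2 - (lc.2.val : ZMod L) * (k.val : ZMod L))

section Chirp

variable {L : ℕ} [NeZero L]

lemma chirp_apply (lc : Fin L × Fin L) (k : Fin L) :
    chirp L lc k = 1 / Real.sqrt L * Complex.exp (2 * (Real.pi : ℂ) * Complex.I *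
      ((lc.1.val : ℂ) * (k.val : ℂ) ^ 2 - (lc.2.val : ℂ) * (k.val : ℂ)) / (L : ℂ)) := by
  have hphase :
      (lc.1.val : ZMod L) * (k.val : ZMod L) ^ 2 - (lc.2.val : ZMod L) * (k.val : ZMod L) =
      ((lc.1.val * k.val ^ 2 - lc.2.val * k.val : ℤ) : ZMod L) := by
    push_cast; rfl
  rw [chirp, hphase, ZMod.stdAddChar_coe, one_div]
  push_cast
  ring_nf

lemma norm_chirp (lc : Fin L × Fin L) (k : Fin L) : ‖chirp L lc k‖ = (√L)⁻¹ := by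
  rw [chirp, norm_mul, AddChar.norm_apply, mul_one, norm_inv, Complex.norm_real,
    Real.norm_of_nonneg (Real.sqrt_nonneg _)]

lemma cnorm_chirp (lc : Fin L × Fin L) : cnorm (chirp L lc) = 1 := by
  have hL : (0 : ℝ) < L := by exact_mod_cast Nat.pos_of_neZero L
  simp only [cnorm, norm_chirp, sum_const, card_univ, Fintype.card_fin, nsmul_eq_mul, inv_pow,
    Real.sq_sqrt hL.le, mul_inv_cancel₀ hL.ne', Real.sqrt_one]

lemma cinner_chirp (lc lc' : Fin L × Fin L) :
    cinner (chirp L lc) (chirp L lc') = (L : ℂ)⁻¹ * ∑ x : ZMod L, ZMod.stdAddChar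
      (((lc'.1.val : ZMod L) - (lc.1.val : ZMod L)) * x ^ 2 +
        ((lc.2.val : ZMod L) - (lc'.2.val : ZMod L)) * x) := by
  have hL : (0 : ℝ) ≤ L := Nat.cast_nonneg L
  have hscale : conj (((√L : ℝ) : ℂ)⁻¹) * ((√L : ℝ) : ℂ)⁻¹ = (L : ℂ)⁻¹ := by
    rw [map_inv₀, Complex.conj_ofReal, ← mul_inv, ← Complex.ofReal_mul, Real.mul_self_sqrt hL]
    push_cast; rfl
  rw [cinner, mul_sum, ← (ZMod.bijective_natCast_finVal L).sum_comp]
  refine sum_congr rfl fun k _ => ?_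
  rw [chirp, chirp, map_mul, mul_mul_mul_comm, hscale, ← AddChar.map_neg_eq_conj,
    ← AddChar.map_add_eq_mul]
  congr 2
  ring

lemma norm_cinner_chirp_le [Fact L.Prime] (h2 : (2 : ZMod L) ≠ 0) {lc lc' : Fin L × Fin L}
    (hne : lc ≠ lc') : ‖cinner (chirp L lc) (chirp L lc')‖ ≤ (√L)⁻¹ := by
  have hinj := (ZMod.bijective_natCast_finVal L).injective
  have hab : (lc'.1.val : ZMod L) - (lc.1.val : ZMod L) ≠ 0 ∨
      (lc.2.val : ZMod L) - (lc'.2.val : ZMod L) ≠ 0 := by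
    simp only [ne_eq, sub_eq_zero, ← not_and_or]
    exact fun h => hne (Prod.ext (hinj h.1).symm (hinj h.2))
  calc ‖cinner (chirp L lc) (chirp L lc')‖
      ≤ (L : ℝ)⁻¹ * √L := by
        rw [cinner_chirp, norm_mul, norm_inv, Complex.norm_natCast]
        gcongr
        simpa using AddChar.norm_sum_quadratic_le (ZMod.isPrimitive_stdAddChar L) h2 hab
    _ = (√L)⁻¹ := by rw [inv_mul_eq_div, Real.sqrt_div_self]

end Chirp

lemma ZMod.two_ne_zero_of_odd {L : ℕ} (hL : Odd L) (h1 : L ≠ 1) : (2 : ZMod L) ≠ 0 := by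
  rw [← Nat.cast_ofNat, Ne, ZMod.natCast_eq_zero_iff]
  intro h
  rcases (Nat.dvd_prime Nat.prime_two).1 h with rfl | rfl
  · exact h1 rfl
  · exact Nat.not_odd_iff_even.2 even_two hL

/-- for odd prime `L`, the quadratic-chirp masked DFT columns
`φ_{λ,c}(k) = (1/√L) e^{2πi(λk² − ck)/L}` have unit norm and pairwise inner products of
magnitude at most `1/√L`; consequently the coherence of the `L × L²` matrix is at most
`1/√L`. -/
theorem quadratic_chirp_coherence (L : ℕ) (hp : Nat.Prime L) (hodd : Odd L) :
    let φ : Fin L × Fin L → Fin L → ℂ := fun lc k =>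
      (1 / Real.sqrt L) * Complex.exp (2 * (Real.pi : ℂ) * Complex.I *
        ((lc.1.val : ℂ) * (k.val : ℂ) ^ 2 - (lc.2.val : ℂ) * (k.val : ℂ)) / (L : ℂ))
    (∀ lc, cnorm (φ lc) = 1) ∧
    (∀ lc lc' : Fin L × Fin L, lc ≠ lc' →
      ‖cinner (φ lc) (φ lc')‖ ≤ 1 / Real.sqrt L) ∧
    coherence φ ≤ 1 / Real.sqrt L := by
  intro φ
  have : Fact L.Prime := ⟨hp⟩
  have hφ : φ = chirp L := funext fun lc => funext fun k => (chirp_apply lc k).symm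
  have hnorm : ∀ lc, cnorm (φ lc) = 1 := hφ ▸ cnorm_chirp
  have hinner : ∀ lc lc' : Fin L × Fin L, lc ≠ lc' →
      ‖cinner (φ lc) (φ lc')‖ ≤ 1 / Real.sqrt L := fun lc lc' hne => by
    rw [hφ, one_div]
    exact norm_cinner_chirp_le (ZMod.two_ne_zero_of_odd hodd hp.one_lt.ne') hne
  exact ⟨hnorm, hinner, coherence_le (by positivity) hnorm hinner⟩

end
end

section
/- Let L be an odd prime, let α be a primitive root modulo L, and let H > 2 be an integer dividing L − 1. Define log_α : {0, …, L−1} → ℤ by log_α(x) = t for x ≢ 0 (mod L), where t is the unique integer in {0, …, L−2} with α^t ≡ x (mod L), and log_α(0) = 0. For λ ∈ {1, …, H−1} and c ∈ {0, …, L−1} define φ_{λ,c} ∈ ℂ^L by φ_{λ,c}(k) = (1/√L) · e^{2πi λ log_α(k)/H} · e^{−2πi kc/L} for k ∈ {0, …, L−1}. Then for all pairs (λ,c) ≠ (λ',c'), |⟨φ_{λ,c}, φ_{λ',c'}⟩| ≤ (√L + 1)/L. -/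
/-!
The mask is a power of a multiplicative character: if `χ` is the character of `ZMod L` with
`χ α = e^{2πi/H}`, then `e^{2πi λ log_α k / H} = χ^λ k` for `k ≠ 0`, while at `k = 0` the mask
is `1` instead of `χ^λ 0 = 0`. Expanding the product, `L ⟨φ_{λ,c}, φ_{λ',c'}⟩ = 1 + g`, where `g`
is the Gauss sum of `χ^{-λ} χ^{λ'}` against the additive character `k ↦ e^{2πi k (c - c')/L}`.
If `λ ≠ λ'` the multiplicative character is nontrivial, so `|g| ≤ √L`; if `λ = λ'` and `c ≠ c'`,
then `g = -1` and the inner product vanishes.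
-/

open ComplexConjugate

noncomputable section

open Complex Subgroup
open scoped Real

theorem MulChar.exists_apply_eq_of_isPrimitiveRoot {M R : Type*} [CommMonoid M] [Fintype M]
    [DecidableEq M] [CommMonoidWithZero R] {α : M} (hα : IsPrimitiveRoot α (Fintype.card Mˣ))
    {ζ : R} (hζ : ζ ^ Fintype.card Mˣ = 1) : ∃ χ : MulChar M R, χ α = ζ := by
  have hcard : Fintype.card Mˣ ≠ 0 := Fintype.card_ne_zero
  set g : Mˣ := (hα.isUnit hcard).unit
  have hgen : ∀ x, x ∈ zpowers g := by
    refine (zpowers g).eq_top_iff'.mp (eq_top_of_card_eq _ ?_)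
    rw [Nat.card_zpowers, Nat.card_eq_fintype_card,
      ← (IsPrimitiveRoot.coe_units_iff.mp hα).eq_orderOf]
  set z : Rˣ := (IsUnit.of_pow_eq_one hζ hcard).unit
  have hz : z ∈ rootsOfUnity (Fintype.card Mˣ) R := by
    rw [_root_.mem_rootsOfUnity, Units.ext_iff]
    exact hζ
  exact ⟨ofRootOfUnity hz hgen, ofRootOfUnity_spec hz hgen⟩

section GaussSum

variable {F : Type*} [Field F] [Fintype F] {χ : MulChar F ℂ}

theorem norm_gaussSum_eq_sqrt_card (hχ : χ ≠ 1) {ψ : AddChar F ℂ} (hψ : ψ.IsPrimitive) :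
    ‖gaussSum χ ψ‖ = √(Fintype.card F) := by
  have h := gaussSum_mul_gaussSum_eq_card hχ hψ
  rw [← star_gaussSum_eq, RCLike.star_def, mul_conj] at h
  have h' : normSq (gaussSum χ ψ) = Fintype.card F := by exact_mod_cast h
  rw [norm_def, h']

theorem norm_gaussSum_le_sqrt_card (hχ : χ ≠ 1) (ψ : AddChar F ℂ) :
    ‖gaussSum χ ψ‖ ≤ √(Fintype.card F) := by
  rcases eq_or_ne ψ 1 with rfl | hψ
  · rw [gaussSum_one_right hχ, norm_zero]
    positivity
  · exact (norm_gaussSum_eq_sqrt_card hχ (AddChar.IsPrimitive.of_ne_one hψ)).le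

end GaussSum

/-- The character with its value at `0` changed from `0` to `1`; this matches the convention
`log_α 0 = 0` of the power-residue mask. -/
def MulChar.fillZero {R : Type*} [CommRing R] [DecidableEq R] (χ : MulChar R ℂ) (x : R) : ℂ :=
  χ x + if x = 0 then 1 else 0

section Mask

variable {F : Type*} [Field F] [DecidableEq F]

theorem MulChar.exp_mul_log_eq_fillZero {α : F} (hα : α ≠ 0) {logα : F → ℕ}
    (hlog0 : logα 0 = 0) (hlog : ∀ x, x ≠ 0 → α ^ logα x = x) {H : ℕ} {χ : MulChar F ℂ}
    (hχ : χ α = exp (2 * π * I / H)) (n : ℕ) (x : F) :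
    exp (2 * π * I * n * logα x / H) = (χ ^ n).fillZero x := by
  rcases eq_or_ne x 0 with rfl | hx
  · simp [fillZero, hlog0]
  calc exp (2 * π * I * n * logα x / H)
      = (exp (2 * π * I / H) ^ n) ^ logα x := by
        rw [← exp_nat_mul, ← exp_nat_mul]
        ring_nf
    _ = (χ ^ n) (α ^ logα x) := by
        rw [map_pow, ← hχ, ← Units.val_mk0 hα, pow_apply_coe]
    _ = (χ ^ n).fillZero x := by rw [hlog x hx, fillZero, if_neg hx, add_zero]

variable [Fintype F]

theorem MulChar.conj_fillZero_mul_fillZero (η η' : MulChar F ℂ) (x : F) :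
    conj (η.fillZero x) * η'.fillZero x = (η⁻¹ * η') x + if x = 0 then 1 else 0 := by
  rcases eq_or_ne x 0 with rfl | hx
  · simp [fillZero]
  · simp [fillZero, hx, ← RCLike.star_def, star_apply']

theorem MulChar.sum_conj_fillZero_mul_fillZero_mul (η η' : MulChar F ℂ) (ψ : AddChar F ℂ) :
    ∑ x, conj (η.fillZero x) * η'.fillZero x * ψ x = gaussSum (η⁻¹ * η') ψ + 1 := by
  simp only [conj_fillZero_mul_fillZero, add_mul, Finset.sum_add_distrib, ite_mul, one_mul,
    zero_mul, Finset.sum_ite_eq', Finset.mem_univ, if_true, AddChar.map_zero_eq_one]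
  rfl

theorem MulChar.norm_sum_conj_fillZero_mul_fillZero_mul_le {η η' : MulChar F ℂ}
    {ψ : AddChar F ℂ} (h : η ≠ η' ∨ ψ ≠ 1) :
    ‖∑ x, conj (η.fillZero x) * η'.fillZero x * ψ x‖ ≤ √(Fintype.card F) + 1 := by
  rw [sum_conj_fillZero_mul_fillZero_mul]
  rcases eq_or_ne η η' with rfl | hne
  · rw [inv_mul_cancel, gaussSum_one_left (h.resolve_left (not_not.mpr rfl)), neg_add_cancel,
      norm_zero]
    positivity
  · calc ‖gaussSum (η⁻¹ * η') ψ + 1‖ ≤ ‖gaussSum (η⁻¹ * η') ψ‖ + ‖(1 : ℂ)‖ := norm_add_le _ _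
      _ ≤ √(Fintype.card F) + 1 :=
        add_le_add (norm_gaussSum_le_sqrt_card (by rwa [ne_eq, inv_mul_eq_one]) ψ) norm_one.le

end Mask

section MaskedDFT

variable {L : ℕ} [NeZero L]

theorem ZMod.bijective_natCast_val : Function.Bijective (fun k : Fin L => (k.val : ZMod L)) := by
  rw [Fintype.bijective_iff_injective_and_card, ZMod.card, Fintype.card_fin]
  refine ⟨fun a b hab => Fin.ext ?_, rfl⟩
  simpa only [ZMod.val_cast_of_lt a.isLt, ZMod.val_cast_of_lt b.isLt] using congrArg ZMod.val hab

theorem exp_neg_mul_div_eq_stdAddChar (k c : ℕ) :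
    exp (-(2 * π * I * k * c) / L) = ZMod.stdAddChar (-(k * c : ZMod L)) := by
  have h := ZMod.stdAddChar_coe (N := L) (-(k * c : ℤ))
  push_cast at h
  rw [h]
  ring_nf

/-- `φ_{λ,c}` is `maskedColumn (χ ^ λ) c` for the character `χ` with `χ α = e^{2πi/H}`. -/
def maskedColumn (η : MulChar (ZMod L) ℂ) (c k : Fin L) : ℂ :=
  1 / √(L : ℝ) * η.fillZero (k.val : ZMod L) * ZMod.stdAddChar (-(k.val * c.val : ZMod L))

theorem cinner_maskedColumn (η η' : MulChar (ZMod L) ℂ) (c c' : Fin L) :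
    cinner (maskedColumn η c) (maskedColumn η' c') = (L : ℂ)⁻¹ *
      ∑ x, conj (η.fillZero x) * η'.fillZero x *
        (ZMod.stdAddChar.mulShift (c.val - c'.val : ZMod L)) x := by
  rw [cinner, Finset.mul_sum]
  refine Fintype.sum_bijective _ ZMod.bijective_natCast_val _ _ fun k => ?_
  have hscale : conj (1 / (√(L : ℝ) : ℂ)) * (1 / (√(L : ℝ) : ℂ)) = (L : ℂ)⁻¹ := by
    rw [map_div₀, map_one, conj_ofReal, div_mul_div_comm, one_mul, ← ofReal_mul,
      Real.mul_self_sqrt L.cast_nonneg, one_div, ofReal_natCast]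
  have hchar (a b : ZMod L) :
      conj (ZMod.stdAddChar (-a)) * ZMod.stdAddChar (-b) = ZMod.stdAddChar (a - b) := by
    rw [← AddChar.map_neg_eq_conj, neg_neg, ← AddChar.map_add_eq_mul, sub_eq_add_neg]
  simp only [maskedColumn, map_mul, AddChar.mulShift_apply]
  rw [← hscale, sub_mul, mul_comm (c.val : ZMod L), mul_comm (c'.val : ZMod L), ← hchar]
  ring

theorem norm_cinner_maskedColumn_le [Fact L.Prime] {η η' : MulChar (ZMod L) ℂ} {c c' : Fin L}
    (h : η ≠ η' ∨ c ≠ c') :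
    ‖cinner (maskedColumn η c) (maskedColumn η' c')‖ ≤ (√(L : ℝ) + 1) / L := by
  rw [cinner_maskedColumn, norm_mul, norm_inv, norm_natCast, inv_mul_eq_div]
  gcongr
  have hψ : η ≠ η' ∨ ZMod.stdAddChar.mulShift (c.val - c'.val : ZMod L) ≠ 1 :=
    h.imp_right fun hc => ZMod.isPrimitive_stdAddChar L <| sub_ne_zero.mpr fun heq =>
      hc (ZMod.bijective_natCast_val.injective heq)
  simpa only [ZMod.card] using MulChar.norm_sum_conj_fillZero_mul_fillZero_mul_le hψ

end MaskedDFT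

theorem power_residue_mask_inner_bound_general (L H : ℕ) (hp : Nat.Prime L)
    (hdvd : H ∣ L - 1)
    (α : ZMod L) (hα : IsPrimitiveRoot α (L - 1))
    (logα : ZMod L → ℕ) (hlog0 : logα 0 = 0)
    (hlog : ∀ x : ZMod L, x ≠ 0 → logα x < L - 1 ∧ α ^ logα x = x) :
    let φ : ℕ → Fin L → Fin L → ℂ := fun lam c k =>
      (1 / Real.sqrt L) *
        Complex.exp (2 * (Real.pi : ℂ) * Complex.I * (lam : ℂ) *
          ((logα ((k.val : ℕ) : ZMod L) : ℕ) : ℂ) / (H : ℂ)) *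
        Complex.exp (-(2 * (Real.pi : ℂ) * Complex.I * (k.val : ℂ) * (c.val : ℂ)) / (L : ℂ))
    ∀ lam lam' : ℕ, ∀ c c' : Fin L,
      1 ≤ lam → lam ≤ H - 1 → 1 ≤ lam' → lam' ≤ H - 1 →
      (lam, c) ≠ (lam', c') →
      ‖cinner (φ lam c) (φ lam' c')‖ ≤ (Real.sqrt L + 1) / L := by
  intro φ lam lam' c c' hlam₁ hlam₂ hlam'₁ hlam'₂ hne
  have : Fact L.Prime := ⟨hp⟩
  have hζ := Complex.isPrimitiveRoot_exp H (by omega)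
  obtain ⟨χ, hχ⟩ := MulChar.exists_apply_eq_of_isPrimitiveRoot (α := α)
    (ζ := exp (2 * π * I / H)) (by rwa [ZMod.card_units])
    (by rw [ZMod.card_units]; exact (hζ.pow_eq_one_iff_dvd _).mpr hdvd)
  have hφ (n : ℕ) : φ n = maskedColumn (χ ^ n) := funext₂ fun c k => by
    simp only [φ, maskedColumn, exp_neg_mul_div_eq_stdAddChar, MulChar.exp_mul_log_eq_fillZero
      (hα.ne_zero (by have := hp.two_le; omega)) hlog0 (fun x hx => (hlog x hx).2) hχ]
  rw [hφ, hφ]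
  have hne' : lam ≠ lam' ∨ c ≠ c' := by
    rw [← not_and_or]
    rintro ⟨rfl, rfl⟩
    exact hne rfl
  refine norm_cinner_maskedColumn_le (hne'.imp (fun hl heq => hl ?_) id)
  have hα_eq := congrArg (· α) heq
  simp only [MulChar.pow_apply' χ (by omega : lam ≠ 0), MulChar.pow_apply' χ (by omega : lam' ≠ 0),
    hχ] at hα_eq
  exact hζ.pow_inj (by omega) (by omega) hα_eq

/-- for odd prime `L`, a primitive root `α` mod `L`, `H > 2` dividing `L−1`,
and the discrete logarithm `logα` (with `logα 0 = 0`), the power-residue masked DFT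
columns `φ_{λ,c}(k) = (1/√L) e^{2πi λ logα(k)/H} e^{−2πi kc/L}`, `λ ∈ {1,…,H−1}`,
satisfy `|⟨φ_{λ,c}, φ_{λ',c'}⟩| ≤ (√L + 1)/L` for all `(λ,c) ≠ (λ',c')`. -/
theorem power_residue_mask_inner_bound (L H : ℕ) (hp : Nat.Prime L) (hodd : Odd L)
    (hH : 2 < H) (hdvd : H ∣ L - 1)
    (α : ZMod L) (hα : IsPrimitiveRoot α (L - 1))
    (logα : ZMod L → ℕ) (hlog0 : logα 0 = 0)
    (hlog : ∀ x : ZMod L, x ≠ 0 → logα x < L - 1 ∧ α ^ logα x = x) :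
    let φ : ℕ → Fin L → Fin L → ℂ := fun lam c k =>
      (1 / Real.sqrt L) *
        Complex.exp (2 * (Real.pi : ℂ) * Complex.I * (lam : ℂ) *
          ((logα ((k.val : ℕ) : ZMod L) : ℕ) : ℂ) / (H : ℂ)) *
        Complex.exp (-(2 * (Real.pi : ℂ) * Complex.I * (k.val : ℂ) * (c.val : ℂ)) / (L : ℂ))
    ∀ lam lam' : ℕ, ∀ c c' : Fin L,
      1 ≤ lam → lam ≤ H - 1 → 1 ≤ lam' → lam' ≤ H - 1 →
      (lam, c) ≠ (lam', c') →
      ‖cinner (φ lam c) (φ lam' c')‖ ≤ (Real.sqrt L + 1) / L :=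
  power_residue_mask_inner_bound_general L H hp hdvd α hα logα hlog0 hlog

end
end

section
/- Let p be a prime, m ≥ 1, q = p^m, L = q − 1, let F_q be a finite field with q elements, let α be a generator of the multiplicative group F_q^×, and let H ≥ 2 be an integer dividing L. Define log_α : F_q → ℤ by log_α(α^t) = t for 0 ≤ t ≤ L−1 and log_α(0) = 0. For λ ∈ {1, …, H−1} and c ∈ {0, …, L−1} define φ_{λ,c} ∈ ℂ^L by φ_{λ,c}(k) = (1/√L) · e^{2πi λ log_α(1 + α^k)/H} · e^{−2πi kc/L} for k ∈ {0, …, L−1}. Then for all pairs (λ,c) ≠ (λ',c'), |⟨φ_{λ,c}, φ_{λ',c'}⟩| ≤ (√(L+1) + 3)/L. -/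
/-!
Put `ζ = e^{2πi/L}`. Multiplying out, `⟨φ_{λ,c}, φ_{λ',c'}⟩ = L⁻¹ Σ_k ζ^{ak + b log_α(1 + α^k)}`
with `a = c − c'` and `b = (λ' − λ) L / H`. As `k ↦ α^k` enumerates `F^×`, this is
`L⁻¹ Σ_{x ∈ F} χ(x) m(1 + x)`, where `χ(α^k) = ζ^{ak}` is a multiplicative character and `m`
agrees with the character `ψ(α^k) = ζ^{bk}` away from `0` and has modulus one at `0`.
If `λ = λ'` then `m ≡ 1` and `χ ≠ 1`, so the sum vanishes by orthogonality. Otherwise `ψ ≠ 1`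
since `0 < |λ' − λ| < H`, and the sum is `χ(−1) J(χ, ψ)` plus one term of modulus at most one;
the Jacobi sum bound `|J(χ, ψ)| ≤ √q` gives `(√(L + 1) + 1) / L`.
-/

open ComplexConjugate

noncomputable section

namespace MulChar

lemma norm_apply_le_one {R : Type*} [CommRing R] [Finite Rˣ] (χ : MulChar R ℂ) (a : R) :
    ‖χ a‖ ≤ 1 := by
  by_cases ha : IsUnit a
  · cases nonempty_fintype Rˣ
    refine (Complex.norm_eq_one_of_pow_eq_one (n := Fintype.card Rˣ) ?_ Fintype.card_ne_zero).le
    rw [← ha.unit_spec, ← map_pow, ← Units.val_pow_eq_pow_val, pow_card_eq_one, Units.val_one,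
      map_one]
  · simp [χ.map_nonunit ha]

end MulChar

section JacobiSum

variable {F : Type*} [Field F] [Fintype F]

lemma norm_jacobiSum_le (χ ψ : MulChar F ℂ) (hψ : ψ ≠ 1) :
    ‖jacobiSum χ ψ‖ ≤ √(Fintype.card F) := by
  classical
  have one_le : (1 : ℝ) ≤ √(Fintype.card F) :=
    Real.one_le_sqrt.mpr (mod_cast Fintype.card_pos)
  by_cases hχ : χ = 1
  · simpa [hχ, jacobiSum_one_nontrivial hψ] using one_le
  by_cases hχψ : χ * ψ = 1
  · rw [eq_inv_of_mul_eq_one_right hχψ, jacobiSum_nontrivial_inv hχ, norm_neg]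
    exact (χ.norm_apply_le_one _).trans one_le
  have hchar : ringChar ℂ ≠ ringChar F := by
    simpa only [ringChar.eq_zero] using (CharP.ringChar_ne_zero_of_finite F).symm
  have hconj : conj (jacobiSum χ ψ) = jacobiSum χ⁻¹ ψ⁻¹ := by
    simp only [jacobiSum, map_sum, map_mul, ← MulChar.star_apply', RCLike.star_def]
  have hsq : ‖jacobiSum χ ψ‖ ^ 2 = Fintype.card F := by
    have := jacobiSum_mul_jacobiSum_inv hchar hχ hψ hχψ
    rw [← hconj, Complex.mul_conj, Complex.normSq_eq_norm_sq] at this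
    exact_mod_cast this
  rw [← hsq, Real.sqrt_sq (norm_nonneg _)]

lemma sum_mulChar_mul_apply_one_add (χ ψ : MulChar F ℂ) :
    ∑ x, χ x * ψ (1 + x) = χ (-1) * jacobiSum χ ψ := by
  rw [jacobiSum, Finset.mul_sum]
  refine Fintype.sum_equiv (Equiv.neg F) _ _ fun x => ?_
  rw [Equiv.neg_apply, ← mul_assoc, ← map_mul, neg_one_mul, neg_neg, sub_neg_eq_add]

lemma norm_sum_mulChar_mul_le (χ ψ : MulChar F ℂ) (hψ : ψ ≠ 1) (m : F → ℂ)
    (hm : ∀ y ≠ 0, m y = ψ y) (hm0 : ‖m 0‖ ≤ 1) :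
    ‖∑ x, χ x * m (1 + x)‖ ≤ √(Fintype.card F) + 1 := by
  classical
  have hsplit : ∀ x,
      χ x * m (1 + x) = χ x * ψ (1 + x) + if x = -1 then χ (-1) * m 0 else 0 := by
    intro x
    by_cases hx : x = -1
    · simp [hx, ψ.map_zero]
    · rw [hm _ (fun h => hx (eq_neg_of_add_eq_zero_right h)), if_neg hx, add_zero]
  rw [Finset.sum_congr rfl fun x _ => hsplit x, Finset.sum_add_distrib,
    sum_mulChar_mul_apply_one_add, Finset.sum_ite_eq' Finset.univ, if_pos (Finset.mem_univ _)]
  grw [norm_add_le, norm_mul, norm_mul, norm_jacobiSum_le χ ψ hψ, hm0,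
    χ.norm_apply_le_one (-1)]
  simp

end JacobiSum

lemma injective_fin_pow_of_log {M : Type*} [Monoid M] {L : ℕ} {α : M} {logα : M → ℕ}
    (hlog : ∀ t < L, logα (α ^ t) = t) : Function.Injective (fun k : Fin L => α ^ (k : ℕ)) :=
  fun k l hkl => Fin.ext <| by rw [← hlog k k.isLt, ← hlog l l.isLt]; exact congrArg logα hkl

section DiscreteLog

variable {F : Type*} [Field F] [Fintype F] {L : ℕ} {α : F} {logα : F → ℕ}

lemma image_pow_eq_univ_erase_zero [DecidableEq F] (hcard : Fintype.card F = L + 1)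
    (hα : α ≠ 0) (hlog : ∀ t < L, logα (α ^ t) = t) :
    Finset.univ.image (fun k : Fin L => α ^ (k : ℕ)) = Finset.univ.erase 0 := by
  refine Finset.eq_of_subset_of_card_le (fun y hy => ?_) ?_
  · obtain ⟨k, -, rfl⟩ := Finset.mem_image.mp hy
    exact Finset.mem_erase.mpr ⟨pow_ne_zero _ hα, Finset.mem_univ _⟩
  · rw [Finset.card_image_of_injective _ (injective_fin_pow_of_log hlog),
      Finset.card_erase_of_mem (Finset.mem_univ _), Finset.card_univ, hcard, Finset.card_univ,
      Fintype.card_fin, Nat.add_sub_cancel]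

lemma exists_pow_eq_of_ne_zero (hcard : Fintype.card F = L + 1) (hα : α ≠ 0)
    (hlog : ∀ t < L, logα (α ^ t) = t) {y : F} (hy : y ≠ 0) : ∃ k < L, α ^ k = y := by
  classical
  have : y ∈ Finset.univ.image (fun k : Fin L => α ^ (k : ℕ)) := by
    rw [image_pow_eq_univ_erase_zero hcard hα hlog]
    exact Finset.mem_erase.mpr ⟨hy, Finset.mem_univ _⟩
  obtain ⟨k, -, hk⟩ := Finset.mem_image.mp this
  exact ⟨k, k.isLt, hk⟩

lemma pow_log_eq_self (hcard : Fintype.card F = L + 1) (hα : α ≠ 0)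
    (hlog : ∀ t < L, logα (α ^ t) = t) {y : F} (hy : y ≠ 0) : α ^ logα y = y := by
  obtain ⟨k, hk, rfl⟩ := exists_pow_eq_of_ne_zero hcard hα hlog hy
  rw [hlog k hk]

lemma sum_fin_pow_eq_sum {M : Type*} [AddCommMonoid M] (hcard : Fintype.card F = L + 1)
    (hα : α ≠ 0) (hlog : ∀ t < L, logα (α ^ t) = t) (f : F → M) (hf : f 0 = 0) :
    ∑ k : Fin L, f (α ^ (k : ℕ)) = ∑ y, f y := by
  classical
  rw [← Finset.sum_image (injective_fin_pow_of_log hlog).injOn,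
    image_pow_eq_univ_erase_zero hcard hα hlog, Finset.sum_erase _ hf]

lemma exists_mulChar_apply_pow {R : Type*} [CommMonoidWithZero R]
    (hcard : Fintype.card F = L + 1) (hα : α ≠ 0) (hlog : ∀ t < L, logα (α ^ t) = t)
    {ζ : R} (hζ : ζ ^ L = 1) : ∃ χ : MulChar F R, ∀ k : ℕ, χ (α ^ k) = ζ ^ k := by
  classical
  have hL : L ≠ 0 := by have := Fintype.one_lt_card (α := F); omega
  obtain ⟨u, rfl⟩ := IsUnit.of_pow_eq_one hζ hL
  have hgen : ∀ v : Fˣ, v ∈ Subgroup.zpowers (Units.mk0 α hα) := fun v => by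
    obtain ⟨k, -, hk⟩ := exists_pow_eq_of_ne_zero hcard hα hlog v.ne_zero
    exact ⟨k, Units.ext <| by simpa using hk⟩
  have hu : u ∈ rootsOfUnity (Fintype.card Fˣ) R := by
    rw [mem_rootsOfUnity, Fintype.card_units, hcard, Nat.add_sub_cancel]
    exact Units.ext (by simpa using hζ)
  refine ⟨MulChar.ofRootOfUnity hu hgen, fun k => ?_⟩
  rw [map_pow, ← MulChar.ofRootOfUnity_spec hu hgen, Units.val_mk0]

theorem norm_sum_zpow_log_le (hcard : Fintype.card F = L + 1) (hα : α ≠ 0)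
    (hlog : ∀ t < L, logα (α ^ t) = t) {ζ : ℂ} (hζ : IsPrimitiveRoot ζ L) {a b : ℤ}
    (hab : ¬((L : ℤ) ∣ a ∧ (L : ℤ) ∣ b)) :
    ‖∑ k : Fin L, ζ ^ (a * (k : ℕ) + b * logα (1 + α ^ (k : ℕ)))‖ ≤ √((L : ℝ) + 1) + 1 := by
  have hL : L ≠ 0 := by have := Fintype.one_lt_card (α := F); omega
  have hζ0 : ζ ≠ 0 := hζ.ne_zero hL
  have hpow : ∀ n : ℤ, (ζ ^ n) ^ L = 1 := fun n => by
    rw [← zpow_natCast, ← zpow_mul, mul_comm, zpow_mul, zpow_natCast, hζ.pow_eq_one, one_zpow]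
  obtain ⟨χ, hχ⟩ := exists_mulChar_apply_pow hcard hα hlog (hpow a)
  obtain ⟨ψ, hψ⟩ := exists_mulChar_apply_pow hcard hα hlog (hpow b)
  have hne_one : ∀ (θ : MulChar F ℂ) (n : ℤ), θ α = ζ ^ n → ¬(L : ℤ) ∣ n → θ ≠ 1 := by
    rintro θ n hθ hn rfl
    exact hn ((hζ.zpow_eq_one_iff_dvd n).mp (by rw [← hθ, MulChar.one_apply hα.isUnit]))
  have hm : ∀ y ≠ 0, ζ ^ (b * logα y) = ψ y := fun y hy => by
    conv_rhs => rw [← pow_log_eq_self hcard hα hlog hy, hψ, ← zpow_natCast, ← zpow_mul]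
  have hsum : ∑ k : Fin L, ζ ^ (a * (k : ℕ) + b * logα (1 + α ^ (k : ℕ)))
      = ∑ x, χ x * ζ ^ (b * logα (1 + x)) := by
    rw [← sum_fin_pow_eq_sum hcard hα hlog (fun x => χ x * ζ ^ (b * logα (1 + x)))
      (by rw [χ.map_zero, zero_mul])]
    refine Finset.sum_congr rfl fun k _ => ?_
    rw [zpow_add₀ hζ0, hχ, zpow_mul, zpow_natCast]
  have hnorm : ∀ n : ℤ, ‖ζ ^ n‖ = 1 := fun n => by rw [norm_zpow, hζ.norm'_eq_one hL, one_zpow]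
  rw [hsum]
  by_cases hb : (L : ℤ) ∣ b
  · have hχ1 : χ ≠ 1 := hne_one χ a (by simpa using hχ 1) fun ha => hab ⟨ha, hb⟩
    have hζb : ∀ t : ℕ, ζ ^ (b * t) = 1 := fun t =>
      (hζ.zpow_eq_one_iff_dvd _).mpr (hb.mul_right t)
    simp only [hζb, mul_one, MulChar.sum_eq_zero_of_ne_one hχ1, norm_zero]
    positivity
  · have hψ1 : ψ ≠ 1 := hne_one ψ b (by simpa using hψ 1) hb
    have := norm_sum_mulChar_mul_le χ ψ hψ1 _ hm (hnorm _).le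
    rwa [hcard, Nat.cast_add, Nat.cast_one] at this

end DiscreteLog

/-- With `t = log_α (1 + α^k)` this is the entry `φ_{λ,c}(k)`. -/
def maskedFourierEntry (L H lam t k c : ℕ) : ℂ :=
  (1 / Real.sqrt L) *
    Complex.exp (2 * (Real.pi : ℂ) * Complex.I * (lam : ℂ) * (t : ℂ) / (H : ℂ)) *
    Complex.exp (-(2 * (Real.pi : ℂ) * Complex.I * (k : ℂ) * (c : ℂ)) / (L : ℂ))

lemma conj_maskedFourierEntry_mul {L H : ℕ} (hL : L ≠ 0) (hH : H ∣ L)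
    (lam lam' t k c c' : ℕ) :
    conj (maskedFourierEntry L H lam t k c) * maskedFourierEntry L H lam' t k c' =
      (L : ℂ)⁻¹ * Complex.exp (2 * Real.pi * Complex.I / L) ^
        (((c : ℤ) - c') * k + ((lam' : ℤ) - lam) * (L / H : ℕ) * t) := by
  have hsqrt : 1 / (√L : ℂ) * (1 / (√L : ℂ)) = (L : ℂ)⁻¹ := by
    rw [one_div_mul_one_div, ← Complex.ofReal_mul, Real.mul_self_sqrt (Nat.cast_nonneg L)]
    simp
  have hcomb : ∀ s s' x y z w : ℂ, s * Complex.exp x * Complex.exp y *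
      (s' * Complex.exp z * Complex.exp w) = s * s' * Complex.exp (x + y + z + w) := by
    intros; simp only [Complex.exp_add]; ring
  rw [← Complex.exp_int_mul, maskedFourierEntry, maskedFourierEntry, map_mul, map_mul,
    map_div₀, map_one, Complex.conj_ofReal, ← Complex.exp_conj, ← Complex.exp_conj, hcomb, hsqrt]
  congr 2
  simp only [map_div₀, map_neg, map_mul, map_ofNat, Complex.conj_I, Complex.conj_ofReal,
    map_natCast]
  obtain ⟨e, rfl⟩ := hH
  obtain ⟨hH0, he0⟩ := mul_ne_zero_iff.mp hL
  rw [Nat.mul_div_cancel_left e (Nat.pos_of_ne_zero hH0)]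
  push_cast
  field_simp
  ring

lemma eq_of_dvd_sub_mul_div {L H x y : ℕ} (hL : L ≠ 0) (hdvd : H ∣ L) (hx : x < H) (hy : y < H)
    (h : (L : ℤ) ∣ ((x : ℤ) - y) * (L / H : ℕ)) : x = y := by
  have hLH : (L : ℤ) = H * (L / H : ℕ) := by exact_mod_cast (Nat.mul_div_cancel' hdvd).symm
  have hLH0 : 0 < L / H := Nat.div_pos (Nat.le_of_dvd (Nat.pos_of_ne_zero hL) hdvd) (by omega)
  rw [hLH] at h
  exact ((Nat.modEq_iff_dvd.mpr (Int.dvd_of_mul_dvd_mul_right (by omega) h)).eq_of_lt_of_lt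
    hy hx).symm

theorem sidelnikov_mask_inner_bound_general (p m : ℕ)
    (F : Type) [Field F] [Fintype F] (hcard : Fintype.card F = p ^ m)
    (L : ℕ) (hL : L = p ^ m - 1)
    (H : ℕ) (hdvd : H ∣ L)
    (α : F)
    (logα : F → ℕ) (hlog0 : logα 0 = 0)
    (hlog : ∀ t : ℕ, t < L → logα (α ^ t) = t) :
    let φ : ℕ → Fin L → Fin L → ℂ := fun lam c k =>
      (1 / Real.sqrt L) *
        Complex.exp (2 * (Real.pi : ℂ) * Complex.I * (lam : ℂ) *
          ((logα (1 + α ^ (k.val : ℕ)) : ℕ) : ℂ) / (H : ℂ)) *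
        Complex.exp (-(2 * (Real.pi : ℂ) * Complex.I * (k.val : ℂ) * (c.val : ℂ)) / (L : ℂ))
    ∀ lam lam' : ℕ, ∀ c c' : Fin L,
      1 ≤ lam → lam ≤ H - 1 → 1 ≤ lam' → lam' ≤ H - 1 →
      (lam, c) ≠ (lam', c') →
      ‖cinner (φ lam c) (φ lam' c')‖
        ≤ (Real.sqrt ((L : ℝ) + 1) + 3) / L := by
  intro φ lam lam' c c' hlam hlamH hlam' hlamH' hne
  have hcardL : Fintype.card F = L + 1 := by have := Fintype.card_pos (α := F); omega
  have hL0 : L ≠ 0 := by have := Fintype.one_lt_card (α := F); omega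
  have hHL : H ≤ L := Nat.le_of_dvd (Nat.pos_of_ne_zero hL0) hdvd
  have hα : α ≠ 0 := fun h => by simpa [h, hlog0] using hlog 1 (by omega)
  have hinner : cinner (φ lam c) (φ lam' c') = (L : ℂ)⁻¹ *
      ∑ k : Fin L, Complex.exp (2 * Real.pi * Complex.I / L) ^
        (((c : ℤ) - c') * (k : ℕ) +
          ((lam' : ℤ) - lam) * (L / H : ℕ) * logα (1 + α ^ (k : ℕ))) := by
    rw [cinner, Finset.mul_sum]
    exact Finset.sum_congr rfl fun k _ => conj_maskedFourierEntry_mul hL0 hdvd _ _ _ _ _ _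
  have hab : ¬((L : ℤ) ∣ (c : ℤ) - c' ∧ (L : ℤ) ∣ ((lam' : ℤ) - lam) * (L / H : ℕ)) := by
    rintro ⟨hc, hlam⟩
    have hc_eq := (Nat.modEq_iff_dvd.mpr hc).eq_of_lt_of_lt c'.isLt c.isLt
    exact hne (by rw [eq_of_dvd_sub_mul_div hL0 hdvd (by omega) (by omega) hlam, Fin.ext hc_eq])
  rw [hinner, norm_mul, norm_inv, Complex.norm_natCast, inv_mul_eq_div]
  gcongr
  grw [norm_sum_zpow_log_le hcardL hα hlog (Complex.isPrimitiveRoot_exp L hL0) hab]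
  linarith

/-- for a finite field `F` with `q = p^m` elements, `L = q − 1`, a generator
`α` of `F^×`, `H ≥ 2` dividing `L`, and the discrete logarithm `logα` (with
`logα 0 = 0`), the Sidelnikov masked DFT columns
`φ_{λ,c}(k) = (1/√L) e^{2πi λ logα(1+α^k)/H} e^{−2πi kc/L}`, `λ ∈ {1,…,H−1}`,
satisfy `|⟨φ_{λ,c}, φ_{λ',c'}⟩| ≤ (√(L+1) + 3)/L` for all `(λ,c) ≠ (λ',c')`. -/
theorem sidelnikov_mask_inner_bound (p m : ℕ) (hp : Nat.Prime p) (hm : 1 ≤ m)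
    (F : Type) [Field F] [Fintype F] (hcard : Fintype.card F = p ^ m)
    (L : ℕ) (hL : L = p ^ m - 1)
    (H : ℕ) (hH : 2 ≤ H) (hdvd : H ∣ L)
    (α : F) (hα : ∀ x : F, x ≠ 0 → ∃ t : ℕ, α ^ t = x)
    (logα : F → ℕ) (hlog0 : logα 0 = 0)
    (hlog : ∀ t : ℕ, t < L → logα (α ^ t) = t) :
    let φ : ℕ → Fin L → Fin L → ℂ := fun lam c k =>
      (1 / Real.sqrt L) *
        Complex.exp (2 * (Real.pi : ℂ) * Complex.I * (lam : ℂ) *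
          ((logα (1 + α ^ (k.val : ℕ)) : ℕ) : ℂ) / (H : ℂ)) *
        Complex.exp (-(2 * (Real.pi : ℂ) * Complex.I * (k.val : ℂ) * (c.val : ℂ)) / (L : ℂ))
    ∀ lam lam' : ℕ, ∀ c c' : Fin L,
      1 ≤ lam → lam ≤ H - 1 → 1 ≤ lam' → lam' ≤ H - 1 →
      (lam, c) ≠ (lam', c') →
      ‖cinner (φ lam c) (φ lam' c')‖
        ≤ (Real.sqrt ((L : ℝ) + 1) + 3) / L :=
  sidelnikov_mask_inner_bound_general p m F hcard L hL H hdvd α logα hlog0 hlog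

end
end
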